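/- arXiv:2207.14791 — 4 statements merged into one kernel-verified Lean document; each statement's English description precedes it below -/
import Mathlib

section
/- For all real z > 0, Q(z) = (1/(2π)) · e^{-z²/2} · ∫₀^∞ e^{-z²x/2} / (√x (1+x)) dx, where Q(z) = (1/√(2π)) ∫_z^∞ e^{-t²/2} dt is the Gaussian Q-function. -/
open MeasureTheory Real Set

noncomputable def gaussQ (z : ℝ) : ℝ :=
  (Real.sqrt (2 * Real.pi))⁻¹ * ∫ t in Set.Ioi z, Real.exp (-t ^ 2 / 2)

private lemma step2 {a : ℝ} (ha : 0 < a) (t : ℝ) :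
    Real.exp a * ∫ s in Ioi a, Real.exp (-((1 + t ^ 2) * s))
      = Real.exp (-(a * t ^ 2)) / (1 + t ^ 2) := by
  have hc : (0:ℝ) < 1 + t ^ 2 := by positivity
  have h := MeasureTheory.integral_comp_mul_left_Ioi (fun s => Real.exp (-s)) a hc
  simp only [smul_eq_mul] at h
  rw [h, integral_exp_neg_Ioi, div_eq_inv_mul, mul_left_comm, ← Real.exp_add]
  ring_nf

lemma fub {a : ℝ} (ha : 0 < a) :
    Integrable (Function.uncurry fun (s t : ℝ) => Real.exp (-((1 + t ^ 2) * s)))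
      ((volume.restrict (Ioi a)).prod (volume.restrict (Ioi 0))) := by
  have hbd : Integrable (fun p : ℝ × ℝ => Real.exp (-(1 : ℝ) * p.1) * Real.exp (-a * p.2 ^ 2))
      ((volume.restrict (Ioi a)).prod (volume.restrict (Ioi 0))) :=
    (exp_neg_integrableOn_Ioi a one_pos).mul_prod
      ((integrable_exp_neg_mul_sq ha).restrict)
  refine hbd.mono' ?_ ?_
  · apply Continuous.aestronglyMeasurable
    fun_prop
  · rw [Measure.prod_restrict]
    filter_upwards [MeasureTheory.ae_restrict_mem (measurableSet_Ioi.prod measurableSet_Ioi)]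
      with p hp
    obtain ⟨hs, ht⟩ := hp
    simp only [Function.uncurry, Real.norm_eq_abs, Real.abs_exp]
    rw [← Real.exp_add]
    apply Real.exp_le_exp.2
    have hs' : a < p.1 := hs
    nlinarith [sq_nonneg p.2]

lemma inner_gauss {s : ℝ} (hs : 0 < s) :
    ∫ t in Ioi (0:ℝ), Real.exp (-((1 + t ^ 2) * s)) = Real.exp (-s) * (Real.sqrt (π / s) / 2) := by
  have : ∀ t : ℝ, Real.exp (-((1 + t ^ 2) * s)) = Real.exp (-s) * Real.exp (-s * t ^ 2) := by
    intro t; rw [← Real.exp_add]; ring_nf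
  simp_rw [this]
  rw [integral_const_mul, integral_gaussian_Ioi]

lemma step4 {z : ℝ} (hz : 0 < z) :
    ∫ s in Ioi (z ^ 2 / 2), Real.exp (-s) * (Real.sqrt (π / s) / 2)
      = (Real.sqrt (2 * π) / 2) * ∫ u in Ioi z, Real.exp (-u ^ 2 / 2) := by
  set g : ℝ → ℝ := fun s => Real.exp (-s) * (Real.sqrt (π / s) / 2) with hg
  set f : ℝ → ℝ := fun u => u ^ 2 / 2 with hfdef
  have hgc : ContinuousOn g (Ioi 0) := by
    apply ContinuousOn.mul (Continuous.continuousOn (by fun_prop))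
    apply ContinuousOn.div_const
    exact Real.continuous_sqrt.comp_continuousOn
      (continuousOn_const.div continuousOn_id fun s hs => ne_of_gt hs)
  have himg1 : f '' Ioi z ⊆ Ioi 0 := by
    rintro _ ⟨u, hu, rfl⟩
    have : z < u := hu
    simp only [f, mem_Ioi]
    nlinarith
  have himg2 : f '' Ici z ⊆ Ici (z ^ 2 / 2) := by
    rintro _ ⟨u, hu, rfl⟩
    have : z ≤ u := hu
    simp only [f, mem_Ici]
    nlinarith
  have hz2 : (0:ℝ) < z ^ 2 / 2 := by positivity
  have hgint : IntegrableOn g (Ici (z ^ 2 / 2)) := by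
    refine Integrable.mono' (g := fun s => Real.sqrt (π / (z ^ 2 / 2)) / 2 * Real.exp (-(1:ℝ) * s))
      ?_ ?_ ?_
    · exact (integrableOn_Ici_iff_integrableOn_Ioi).mpr
        ((exp_neg_integrableOn_Ioi (z ^ 2 / 2) one_pos).const_mul _)
    · exact (hgc.mono fun s hs => lt_of_lt_of_le hz2 hs).aestronglyMeasurable measurableSet_Ici
    · filter_upwards [MeasureTheory.ae_restrict_mem measurableSet_Ici] with s hs
      have hs0 : (0:ℝ) < s := lt_of_lt_of_le hz2 hs
      have h1 : Real.sqrt (π / s) ≤ Real.sqrt (π / (z ^ 2 / 2)) :=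
        Real.sqrt_le_sqrt (div_le_div_of_nonneg_left pi_pos.le hz2 hs)
      have h2 : (0:ℝ) ≤ Real.exp (-s) := (Real.exp_pos _).le
      rw [Real.norm_eq_abs, abs_of_nonneg (by positivity)]
      rw [neg_one_mul]
      calc Real.exp (-s) * (Real.sqrt (π / s) / 2)
          ≤ Real.exp (-s) * (Real.sqrt (π / (z ^ 2 / 2)) / 2) := by
            apply mul_le_mul_of_nonneg_left (by linarith) h2
        _ = Real.sqrt (π / (z ^ 2 / 2)) / 2 * Real.exp (-s) := by ring
  have key : (∫ u in Ioi z, (g ∘ f) u * u) = ∫ s in Ioi (f z), g s := by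
    apply MeasureTheory.integral_comp_mul_deriv_Ioi
    · fun_prop
    · have : Filter.Tendsto (fun u : ℝ => u ^ 2) Filter.atTop Filter.atTop :=
        Filter.tendsto_pow_atTop two_ne_zero
      exact Filter.Tendsto.atTop_div_const two_pos this
    · intro x hx
      have := ((hasDerivAt_pow 2 x).div_const 2).hasDerivWithinAt (s := Ioi x)
      simpa using this
    · exact hgc.mono himg1
    · exact hgint.mono_set himg2
    · apply MeasureTheory.Integrable.congr
        (f := fun u : ℝ => Real.exp (-(1/2 : ℝ) * u ^ 2) * (Real.sqrt (2 * π) / 2))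
      · exact (integrable_exp_neg_mul_sq (by norm_num)).restrict.mul_const _
      · filter_upwards [MeasureTheory.ae_restrict_mem measurableSet_Ici] with u hu
        have hu0 : (0:ℝ) < u := lt_of_lt_of_le hz hu
        simp only [g, f, Function.comp]
        have : Real.sqrt (π / (u ^ 2 / 2)) = Real.sqrt (2 * π) / u := by
          rw [eq_div_iff hu0.ne', ← Real.sqrt_sq hu0.le, ← Real.sqrt_mul (by positivity)]
          congr 1
          field_simp
          rw [Real.sq_sqrt (sq_nonneg u)]
        rw [this]
        field_simp
  have congr2 : (∫ u in Ioi z, (g ∘ f) u * u)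
      = ∫ u in Ioi z, Real.exp (-u ^ 2 / 2) * (Real.sqrt (2 * π) / 2) := by
    apply MeasureTheory.setIntegral_congr_fun measurableSet_Ioi
    intro u hu
    have hu0 : (0:ℝ) < u := lt_trans hz hu
    simp only [g, f, Function.comp]
    have : Real.sqrt (π / (u ^ 2 / 2)) = Real.sqrt (2 * π) / u := by
      rw [eq_div_iff hu0.ne', ← Real.sqrt_sq hu0.le, ← Real.sqrt_mul (by positivity)]
      congr 1
      field_simp
      rw [Real.sq_sqrt (sq_nonneg u)]
    rw [this]
    field_simp
  have : f z = z ^ 2 / 2 := rfl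
  rw [← this, ← key, congr2, MeasureTheory.integral_mul_const]
  ring

lemma step1 (z : ℝ) (hz : 0 < z) :
    ∫ x in Ioi (0:ℝ), Real.exp (-z ^ 2 * x / 2) / (Real.sqrt x * (1 + x))
      = ∫ t in Ioi (0:ℝ), 2 * (Real.exp (-(z ^ 2 / 2 * t ^ 2)) / (1 + t ^ 2)) := by
  rw [← integral_comp_rpow_Ioi_of_pos (g := fun x => Real.exp (-z ^ 2 * x / 2) / (Real.sqrt x * (1 + x)))
    (p := 2) two_pos]
  apply MeasureTheory.setIntegral_congr_fun measurableSet_Ioi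
  intro t ht
  have ht0 : (0:ℝ) < t := ht
  have h1 : t ^ ((2:ℝ) - 1) = t := by norm_num
  have h2 : t ^ (2:ℝ) = t ^ 2 := by
    rw [show (2:ℝ) = ((2:ℕ):ℝ) by norm_num, Real.rpow_natCast]
  simp only [smul_eq_mul, h1, h2]
  rw [Real.sqrt_sq ht0.le]
  rw [show -z ^ 2 * t ^ 2 / 2 = -(z ^ 2 / 2 * t ^ 2) by ring]
  field_simp

theorem gaussQ_contour_representation' (z : ℝ) (hz : 0 < z) :
    (Real.sqrt (2 * Real.pi))⁻¹ * ∫ t in Set.Ioi z, Real.exp (-t ^ 2 / 2)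
      = (1 / (2 * Real.pi)) * Real.exp (-z ^ 2 / 2) *
      ∫ x in Set.Ioi (0 : ℝ), Real.exp (-z ^ 2 * x / 2) / (Real.sqrt x * (1 + x)) := by
  set a : ℝ := z ^ 2 / 2 with ha
  have ha0 : 0 < a := by positivity
  rw [step1 z hz]
  have e2 : ∫ t in Ioi (0:ℝ), 2 * (Real.exp (-(a * t ^ 2)) / (1 + t ^ 2))
      = 2 * Real.exp a * ∫ t in Ioi (0:ℝ), ∫ s in Ioi a, Real.exp (-((1 + t ^ 2) * s)) := by
    rw [mul_assoc, ← MeasureTheory.integral_const_mul, ← MeasureTheory.integral_const_mul]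
    apply MeasureTheory.setIntegral_congr_fun measurableSet_Ioi
    intro t _
    simp only []
    rw [step2 ha0 t]
  have e3 : ∫ t in Ioi (0:ℝ), ∫ s in Ioi a, Real.exp (-((1 + t ^ 2) * s))
      = ∫ s in Ioi a, ∫ t in Ioi (0:ℝ), Real.exp (-((1 + t ^ 2) * s)) :=
    (MeasureTheory.integral_integral_swap (fub ha0)).symm
  have e4 : ∫ s in Ioi a, ∫ t in Ioi (0:ℝ), Real.exp (-((1 + t ^ 2) * s))
      = ∫ s in Ioi a, Real.exp (-s) * (Real.sqrt (π / s) / 2) := by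
    apply MeasureTheory.setIntegral_congr_fun measurableSet_Ioi
    intro s hs
    exact inner_gauss (lt_trans ha0 hs)
  rw [e2, e3, e4, ha, step4 hz]
  have hexp : Real.exp (-z ^ 2 / 2) * Real.exp (z ^ 2 / 2) = 1 := by
    rw [← Real.exp_add, show -z ^ 2 / 2 + z ^ 2 / 2 = 0 by ring, Real.exp_zero]
  have h2pi : (0:ℝ) < 2 * π := by positivity
  have hsq : Real.sqrt (2 * π) * Real.sqrt (2 * π) = 2 * π := Real.mul_self_sqrt h2pi.le
  have hpos : (0:ℝ) < Real.sqrt (2 * π) := Real.sqrt_pos.2 h2pi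
  set J := ∫ t in Ioi z, Real.exp (-t ^ 2 / 2) with hJ
  have hr : (1 / (2 * π)) * Real.exp (-z ^ 2 / 2) *
      (2 * Real.exp (z ^ 2 / 2) * (Real.sqrt (2 * π) / 2 * J))
      = Real.sqrt (2 * π) / (2 * π) * J * (Real.exp (-z ^ 2 / 2) * Real.exp (z ^ 2 / 2)) := by
    ring
  rw [hr, hexp, mul_one]
  have : Real.sqrt (2 * π) / (2 * π) = (Real.sqrt (2 * π))⁻¹ := by
    rw [← hsq]; field_simp
    rw [Real.sqrt_sq hpos.le]
  rw [this]

theorem gaussQ_contour_representation (z : ℝ) (hz : 0 < z) :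
    gaussQ z = (1 / (2 * Real.pi)) * Real.exp (-z ^ 2 / 2) *
      ∫ x in Set.Ioi (0 : ℝ), Real.exp (-z ^ 2 * x / 2) / (Real.sqrt x * (1 + x)) := by
  rw [gaussQ]
  exact gaussQ_contour_representation' z hz
end

section
/- Let m > 0, γ̄ > 0, α > 0, and let f_γ(γ) = (m/γ̄)^m γ^{m-1} e^{-mγ/γ̄} / Γ(m) be the Nakagami-m (Gamma) SNR density. Then ∫₀^∞ Q(√(2αγ)) f_γ(γ) dγ = (1/2) I_{m/(m+αγ̄)}(m, 1/2), where I_x(a,b) is the regularized incomplete beta function and Q is the Gaussian Q-function. -/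
open MeasureTheory Real Set

noncomputable def incBeta (x a b : ℝ) : ℝ :=
  ∫ t in (0:ℝ)..x, t ^ (a - 1) * (1 - t) ^ (b - 1)

noncomputable def regIncBeta (x a b : ℝ) : ℝ := incBeta x a b / incBeta 1 a b

noncomputable def nakagamiPdf (m γbar γ : ℝ) : ℝ :=
  (m / γbar) ^ m * γ ^ (m - 1) * Real.exp (-m * γ / γbar) / Real.Gamma m

/-!
Both sides tend to `0` as `α → ∞`, so it suffices that they have the same derivative in `α`.
Differentiating under the integral sign, `d/dα Q(√(2αγ)) = -e^{-αγ} √γ / (2√(πα))`, which turns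
the derivative of the left side into a Gamma integral,
`-Γ(m + 1/2) (m/γ̄)^m (α + m/γ̄)^{-(m + 1/2)} / (2 √(πα) Γ(m))`.
The right side is differentiated by the chain rule through `x = m / (m + αγ̄)`, using
`B(m, 1/2) = √π Γ(m) / Γ(m + 1/2)`, and gives the same expression.
-/

open Filter Topology

lemma eqOn_Ioi_of_hasDerivAt_of_tendsto_atTop {E : Type*} [NormedAddCommGroup E] [NormedSpace ℝ E]
    {f g f' : ℝ → E} {a : ℝ} {l : E} (hf : ∀ x ∈ Ioi a, HasDerivAt f (f' x) x)
    (hg : ∀ x ∈ Ioi a, HasDerivAt g (f' x) x) (hfl : Tendsto f atTop (𝓝 l))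
    (hgl : Tendsto g atTop (𝓝 l)) : EqOn f g (Ioi a) := by
  intro x hx
  have hderiv : ∀ y ∈ Ioi a, HasDerivAt (fun y => f y - g y) 0 y := fun y hy => by
    simpa using (hf y hy).fun_sub (hg y hy)
  have hconst : ∀ y ∈ Ioi a, f y - g y = f x - g x := fun y hy =>
    isOpen_Ioi.is_const_of_deriv_eq_zero isPreconnected_Ioi
      (fun z hz => (hderiv z hz).differentiableAt.differentiableWithinAt)
      (fun z hz => (hderiv z hz).deriv) hy hx
  have hlim : Tendsto (fun y => f y - g y) atTop (𝓝 (f x - g x)) :=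
    tendsto_const_nhds.congr' <| (eventually_gt_atTop a).mono fun y hy => (hconst y hy).symm
  exact sub_eq_zero.1 <| tendsto_nhds_unique hlim (by simpa using hfl.sub hgl)

lemma integrable_exp_neg_sq_div_two : Integrable fun t : ℝ => rexp (-t ^ 2 / 2) := by
  simpa [div_eq_inv_mul] using integrable_exp_neg_mul_sq (by norm_num : (0:ℝ) < 2⁻¹)

lemma integral_exp_neg_sq_div_two : ∫ t : ℝ, rexp (-t ^ 2 / 2) = √(2 * π) := by
  simpa [div_eq_inv_mul] using integral_gaussian 2⁻¹

lemma gaussQ_eq_sub_primitive (z : ℝ) :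
    gaussQ z = (√(2 * π))⁻¹ *
      ((∫ t in Ioi 0, rexp (-t ^ 2 / 2)) - ∫ t in (0:ℝ)..z, rexp (-t ^ 2 / 2)) := by
  rw [gaussQ, ← intervalIntegral.integral_Ioi_sub_Ioi' integrable_exp_neg_sq_div_two.integrableOn
    integrable_exp_neg_sq_div_two.integrableOn, sub_sub_cancel]

lemma hasDerivAt_gaussQ (z : ℝ) :
    HasDerivAt gaussQ (-((√(2 * π))⁻¹ * rexp (-z ^ 2 / 2))) z := by
  have hcont : Continuous fun t : ℝ => rexp (-t ^ 2 / 2) := by fun_prop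
  have hprim : HasDerivAt (fun u => ∫ t in (0:ℝ)..u, rexp (-t ^ 2 / 2)) (rexp (-z ^ 2 / 2)) z :=
    intervalIntegral.integral_hasDerivAt_right integrable_exp_neg_sq_div_two.intervalIntegrable
      (hcont.stronglyMeasurableAtFilter _ _) hcont.continuousAt
  rw [funext gaussQ_eq_sub_primitive]
  simpa using ((hasDerivAt_const z _).sub hprim).const_mul (√(2 * π))⁻¹

lemma continuous_gaussQ : Continuous gaussQ :=
  continuous_iff_continuousAt.2 fun z => (hasDerivAt_gaussQ z).continuousAt

lemma gaussQ_nonneg (z : ℝ) : 0 ≤ gaussQ z :=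
  mul_nonneg (by positivity) (setIntegral_nonneg measurableSet_Ioi fun t _ => (exp_pos _).le)

lemma gaussQ_le_one (z : ℝ) : gaussQ z ≤ 1 := by
  have htail : ∫ t in Ioi z, rexp (-t ^ 2 / 2) ≤ √(2 * π) :=
    integral_exp_neg_sq_div_two ▸ setIntegral_le_integral integrable_exp_neg_sq_div_two
      (.of_forall fun t => (exp_pos _).le)
  calc gaussQ z ≤ (√(2 * π))⁻¹ * √(2 * π) := mul_le_mul_of_nonneg_left htail (by positivity)
    _ = 1 := inv_mul_cancel₀ (by positivity)

lemma tendsto_gaussQ_atTop : Tendsto gaussQ atTop (𝓝 0) := by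
  have hprim : Tendsto (fun z => ∫ t in (0:ℝ)..z, rexp (-t ^ 2 / 2)) atTop
      (𝓝 (∫ t in Ioi 0, rexp (-t ^ 2 / 2))) :=
    intervalIntegral_tendsto_integral_Ioi 0 integrable_exp_neg_sq_div_two.integrableOn tendsto_id
  rw [funext gaussQ_eq_sub_primitive]
  have hlim := ((tendsto_const_nhds (x := ∫ t in Ioi 0, rexp (-t ^ 2 / 2))).sub hprim).const_mul
    (√(2 * π))⁻¹
  rwa [sub_self, mul_zero] at hlim

lemma hasDerivAt_gaussQ_sqrt_mul {γ a : ℝ} (hγ : 0 < γ) (ha : 0 < a) :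
    HasDerivAt (fun a => gaussQ √(2 * a * γ))
      (-((√(2 * π))⁻¹ * rexp (-(a * γ)) * (√γ / √(2 * a)))) a := by
  have hlin : HasDerivAt (fun a : ℝ => 2 * a * γ) (2 * γ) a := by
    simpa using ((hasDerivAt_id a).const_mul 2).mul_const γ
  have hsqrt := (hasDerivAt_sqrt (by positivity)).comp a hlin
  refine ((hasDerivAt_gaussQ _).comp a hsqrt).congr_deriv ?_
  rw [Function.comp_apply, sq_sqrt (by positivity), sqrt_mul (by positivity) γ]
  field_simp
  rw [sq_sqrt hγ.le]

section GaussQAverage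

variable {g : ℝ → ℝ}

lemma aestronglyMeasurable_gaussQ_sqrt_mul (hg : IntegrableOn g (Ioi 0)) (a : ℝ) :
    AEStronglyMeasurable (fun γ => gaussQ √(2 * a * γ) * g γ) (volume.restrict (Ioi 0)) :=
  (continuous_gaussQ.comp (by fun_prop)).aestronglyMeasurable.mul hg.aestronglyMeasurable

lemma norm_gaussQ_sqrt_mul_le (a γ : ℝ) : ‖gaussQ √(2 * a * γ) * g γ‖ ≤ ‖g γ‖ := by
  rw [norm_mul, Real.norm_of_nonneg (gaussQ_nonneg _)]
  exact mul_le_of_le_one_left (norm_nonneg _) (gaussQ_le_one _)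

lemma tendsto_integral_gaussQ_sqrt_mul_atTop (hg : IntegrableOn g (Ioi 0)) :
    Tendsto (fun a => ∫ γ in Ioi 0, gaussQ √(2 * a * γ) * g γ) atTop (𝓝 0) := by
  have hpointwise : ∀ γ ∈ Ioi (0:ℝ), Tendsto (fun a => gaussQ √(2 * a * γ) * g γ) atTop (𝓝 0) := by
    intro γ hγ
    have hsqrt : Tendsto (fun a => √(2 * a * γ)) atTop atTop :=
      tendsto_sqrt_atTop.comp ((tendsto_id.const_mul_atTop two_pos).atTop_mul_const hγ)
    simpa using (tendsto_gaussQ_atTop.comp hsqrt).mul_const (g γ)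
  simpa using tendsto_integral_filter_of_dominated_convergence (fun γ => ‖g γ‖)
    (.of_forall (aestronglyMeasurable_gaussQ_sqrt_mul hg))
    (.of_forall fun a => .of_forall (norm_gaussQ_sqrt_mul_le a))
    hg.norm ((ae_restrict_mem measurableSet_Ioi).mono hpointwise)

lemma hasDerivAt_integral_gaussQ_sqrt_mul (hg : IntegrableOn g (Ioi 0))
    (hg' : IntegrableOn (fun γ => √γ * g γ) (Ioi 0)) {α : ℝ} (hα : 0 < α) :
    HasDerivAt (fun a => ∫ γ in Ioi 0, gaussQ √(2 * a * γ) * g γ)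
      (∫ γ in Ioi 0, -((√(2 * π))⁻¹ * rexp (-(α * γ)) * (√γ / √(2 * α))) * g γ) α := by
  have hbound : ∀ γ ∈ Ioi (0:ℝ), ∀ a ∈ Ioi (α / 2),
      ‖-((√(2 * π))⁻¹ * rexp (-(a * γ)) * (√γ / √(2 * a))) * g γ‖ ≤
        (√(2 * π))⁻¹ / √α * ‖√γ * g γ‖ := by
    intro γ hγ a ha
    have hα_le : √α ≤ √(2 * a) := sqrt_le_sqrt (by linarith [mem_Ioi.1 ha])
    have hexp : rexp (-(a * γ)) ≤ 1 := exp_le_one_iff.2 (by nlinarith [mem_Ioi.1 ha, mem_Ioi.1 hγ])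
    calc ‖-((√(2 * π))⁻¹ * rexp (-(a * γ)) * (√γ / √(2 * a))) * g γ‖
        = (√(2 * π))⁻¹ * rexp (-(a * γ)) * (√γ / √(2 * a)) * ‖g γ‖ := by
          rw [norm_mul, norm_neg, Real.norm_of_nonneg (by positivity)]
      _ ≤ (√(2 * π))⁻¹ * 1 * (√γ / √α) * ‖g γ‖ := by gcongr
      _ = (√(2 * π))⁻¹ / √α * ‖√γ * g γ‖ := by
          rw [norm_mul, Real.norm_of_nonneg (sqrt_nonneg γ)]
          ring
  refine (hasDerivAt_integral_of_dominated_loc_of_deriv_le (Ioi_mem_nhds (half_lt_self hα))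
    (.of_forall (aestronglyMeasurable_gaussQ_sqrt_mul hg))
    (hg.norm.mono' (aestronglyMeasurable_gaussQ_sqrt_mul hg α)
      (.of_forall (norm_gaussQ_sqrt_mul_le α)))
    ((by fun_prop : Continuous fun γ => -((√(2 * π))⁻¹ * rexp (-(α * γ)) * (√γ / √(2 * α))))
      |>.aestronglyMeasurable.mul hg.aestronglyMeasurable)
    ((ae_restrict_mem measurableSet_Ioi).mono hbound) (hg'.norm.const_mul _)
    ((ae_restrict_mem measurableSet_Ioi).mono fun γ hγ a ha =>
      (hasDerivAt_gaussQ_sqrt_mul hγ (by linarith [mem_Ioi.1 ha])).mul_const (g γ))).2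

end GaussQAverage

lemma integrableOn_rpow_sub_one_mul_exp_neg_mul {s b : ℝ} (hs : 0 < s) (hb : 0 < b) :
    IntegrableOn (fun t : ℝ => t ^ (s - 1) * rexp (-(b * t))) (Ioi 0) := by
  simpa using integrableOn_rpow_mul_exp_neg_mul_rpow (p := 1) (by linarith) one_pos hb

section Nakagami

variable {m γbar : ℝ}

lemma nakagamiPdf_eq (γ : ℝ) : nakagamiPdf m γbar γ =
    (m / γbar) ^ m / Gamma m * (γ ^ (m - 1) * rexp (-(m / γbar * γ))) := by
  rw [nakagamiPdf, show -m * γ / γbar = -(m / γbar * γ) by ring]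
  ring

lemma sqrt_mul_exp_mul_nakagamiPdf (a : ℝ) {γ : ℝ} (hγ : 0 < γ) :
    √γ * rexp (-(a * γ)) * nakagamiPdf m γbar γ =
      (m / γbar) ^ m / Gamma m * (γ ^ (m + 1 / 2 - 1) * rexp (-((a + m / γbar) * γ))) := by
  rw [nakagamiPdf_eq, show m + 1 / 2 - 1 = 1 / 2 + (m - 1) by ring, rpow_add hγ, ← sqrt_eq_rpow,
    add_mul, neg_add, exp_add]
  ring

lemma integrableOn_nakagamiPdf (hm : 0 < m) (hγbar : 0 < γbar) :
    IntegrableOn (nakagamiPdf m γbar) (Ioi 0) := by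
  rw [funext nakagamiPdf_eq]
  exact (integrableOn_rpow_sub_one_mul_exp_neg_mul hm (by positivity)).const_mul _

lemma integrableOn_sqrt_mul_nakagamiPdf (hm : 0 < m) (hγbar : 0 < γbar) :
    IntegrableOn (fun γ => √γ * nakagamiPdf m γbar γ) (Ioi 0) := by
  refine IntegrableOn.congr_fun ((integrableOn_rpow_sub_one_mul_exp_neg_mul (s := m + 1 / 2)
    (by linarith) (by positivity : 0 < 0 + m / γbar)).const_mul ((m / γbar) ^ m / Gamma m))
    (fun γ hγ => ?_) measurableSet_Ioi
  simpa using (sqrt_mul_exp_mul_nakagamiPdf 0 hγ).symm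

lemma integral_sqrt_mul_exp_mul_nakagamiPdf (hm : 0 < m) {a : ℝ} (ha : 0 < a + m / γbar) :
    ∫ γ in Ioi 0, √γ * rexp (-(a * γ)) * nakagamiPdf m γbar γ =
      (m / γbar) ^ m / Gamma m * ((1 / (a + m / γbar)) ^ (m + 1 / 2) * Gamma (m + 1 / 2)) := by
  rw [setIntegral_congr_fun measurableSet_Ioi fun γ hγ => sqrt_mul_exp_mul_nakagamiPdf a hγ,
    integral_const_mul, integral_rpow_mul_exp_neg_mul_Ioi (by linarith) ha]

end Nakagami

section IncBeta

variable {a b : ℝ}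

lemma incBeta_one_eq_Gamma_mul_Gamma_div (ha : 0 < a) (hb : 0 < b) :
    incBeta 1 a b = Gamma a * Gamma b / Gamma (a + b) := by
  have hbeta : Complex.betaIntegral a b = (incBeta 1 a b : ℂ) := by
    rw [Complex.betaIntegral, incBeta, ← intervalIntegral.integral_ofReal]
    refine intervalIntegral.integral_congr fun t ht => ?_
    rw [uIcc_of_le zero_le_one] at ht
    push_cast
    rw [Complex.ofReal_cpow ht.1, Complex.ofReal_cpow (sub_nonneg.2 ht.2)]
    push_cast
    ring
  have hGamma := Complex.Gamma_mul_Gamma_eq_betaIntegral (s := a) (t := b) (by simpa) (by simpa)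
  rw [hbeta, ← Complex.ofReal_add, Complex.Gamma_ofReal, Complex.Gamma_ofReal,
    Complex.Gamma_ofReal] at hGamma
  rw [eq_div_iff (Gamma_pos_of_pos (add_pos ha hb)).ne']
  exact_mod_cast (hGamma.trans (mul_comm _ _)).symm

lemma continuousOn_betaKernel :
    ContinuousOn (fun t : ℝ => t ^ (a - 1) * (1 - t) ^ (b - 1)) (Ioo 0 1) := by
  intro t ht
  refine ContinuousAt.continuousWithinAt ?_
  exact (continuousAt_rpow_const _ _ (.inl ht.1.ne')).mul
    ((continuousAt_const.sub continuousAt_id).rpow_const (.inl (sub_pos.2 ht.2).ne'))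

lemma intervalIntegrable_betaKernel (ha : 0 < a) {x : ℝ} (hx : x < 1) :
    IntervalIntegrable (fun t : ℝ => t ^ (a - 1) * (1 - t) ^ (b - 1)) volume 0 x := by
  refine (intervalIntegral.intervalIntegrable_rpow' (by linarith)).mul_continuousOn ?_
  intro t ht
  have ht₁ : t < 1 := ht.2.trans_lt (max_lt one_pos hx)
  refine ContinuousAt.continuousWithinAt ?_
  exact (continuousAt_const.sub continuousAt_id).rpow_const (.inl (sub_pos.2 ht₁).ne')

lemma hasDerivAt_incBeta (ha : 0 < a) {x : ℝ} (hx₀ : 0 < x) (hx₁ : x < 1) :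
    HasDerivAt (fun x => incBeta x a b) (x ^ (a - 1) * (1 - x) ^ (b - 1)) x :=
  intervalIntegral.integral_hasDerivAt_right (intervalIntegrable_betaKernel ha hx₁)
    (continuousOn_betaKernel.stronglyMeasurableAtFilter isOpen_Ioo x ⟨hx₀, hx₁⟩)
    (continuousOn_betaKernel.continuousAt (Ioo_mem_nhds hx₀ hx₁))

lemma tendsto_incBeta_nhdsGE_zero (ha : 0 < a) :
    Tendsto (fun x => incBeta x a b) (𝓝[≥] 0) (𝓝 0) := by
  have hcont := intervalIntegral.continuousOn_primitive_interval'
    (intervalIntegrable_betaKernel (b := b) ha one_half_lt_one) left_mem_uIcc 0 left_mem_uIcc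
  rw [uIcc_of_le one_half_pos.le] at hcont
  simpa [incBeta] using (hcont.mono_of_mem_nhdsWithin (Icc_mem_nhdsGE one_half_pos)).tendsto

end IncBeta

section AverageOverNakagami

variable {m γbar : ℝ}

lemma hasDerivAt_integral_gaussQ_sqrt_mul_nakagamiPdf (hm : 0 < m) (hγbar : 0 < γbar) {α : ℝ}
    (hα : 0 < α) :
    HasDerivAt (fun a => ∫ γ in Ioi 0, gaussQ √(2 * a * γ) * nakagamiPdf m γbar γ)
      (-((√(2 * π))⁻¹ / √(2 * α) * ((m / γbar) ^ m / Gamma m *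
        ((1 / (α + m / γbar)) ^ (m + 1 / 2) * Gamma (m + 1 / 2))))) α := by
  convert hasDerivAt_integral_gaussQ_sqrt_mul (integrableOn_nakagamiPdf hm hγbar)
    (integrableOn_sqrt_mul_nakagamiPdf hm hγbar) hα using 1
  rw [← integral_sqrt_mul_exp_mul_nakagamiPdf hm (by positivity), ← integral_const_mul,
    ← integral_neg]
  congr 1 with γ
  ring

lemma hasDerivAt_half_regIncBeta (hm : 0 < m) (hγbar : 0 < γbar) {α : ℝ} (hα : 0 < α) :
    HasDerivAt (fun a => 1 / 2 * regIncBeta (m / (m + a * γbar)) m (1 / 2))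
      (-((√(2 * π))⁻¹ / √(2 * α) * ((m / γbar) ^ m / Gamma m *
        ((1 / (α + m / γbar)) ^ (m + 1 / 2) * Gamma (m + 1 / 2))))) α := by
  set s := m + α * γbar with hs_def
  have hs : 0 < s := by positivity
  have hx : HasDerivAt (fun a => m / (m + a * γbar)) (-(m * γbar) / s ^ 2) α := by
    simpa using
      (hasDerivAt_const α m).fun_div (((hasDerivAt_id α).mul_const γbar).const_add m) hs.ne'
  have hx₁ : m / s < 1 := (div_lt_one hs).2 (by simp [hs_def]; positivity)
  have hB := (((hasDerivAt_incBeta (b := 1 / 2) hm (by positivity) hx₁).comp α hx).div_const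
    (incBeta 1 m (1 / 2))).const_mul (1 / 2 : ℝ)
  refine hB.congr_deriv ?_
  rw [incBeta_one_eq_Gamma_mul_Gamma_div hm one_half_pos, Gamma_one_half_eq]
  have h1 : 1 - m / s = α * γbar / s := by field_simp; ring
  have h2 : 1 / (α + m / γbar) = γbar / s := by field_simp; ring
  have hpow : (m / γbar) ^ m * (γbar / s) ^ m = (m / s) ^ m := by
    rw [← mul_rpow (by positivity) (by positivity)]
    congr 1
    field_simp
  rw [h1, h2, rpow_add (by positivity), rpow_sub_one (by positivity), rpow_sub_one (by positivity),
    ← sqrt_eq_rpow, ← sqrt_eq_rpow, sqrt_div' _ hs.le, sqrt_div' _ hs.le, sqrt_mul hα.le,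
    sqrt_mul zero_le_two, sqrt_mul zero_le_two, ← hpow]
  field_simp
  rw [sq_sqrt hα.le, sq_sqrt zero_le_two]
  ring

lemma tendsto_half_regIncBeta_atTop (hm : 0 < m) (hγbar : 0 < γbar) :
    Tendsto (fun a => 1 / 2 * regIncBeta (m / (m + a * γbar)) m (1 / 2)) atTop (𝓝 0) := by
  have hx : Tendsto (fun a => m / (m + a * γbar)) atTop (𝓝[≥] 0) := by
    refine tendsto_nhdsWithin_iff.2 ⟨tendsto_const_nhds.div_atTop ?_, ?_⟩
    · exact tendsto_atTop_add_const_left _ _ (tendsto_id.atTop_mul_const hγbar)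
    · filter_upwards [eventually_ge_atTop 0] with a ha
      exact mem_Ici.2 (by positivity)
  simpa [regIncBeta] using
    (((tendsto_incBeta_nhdsGE_zero hm).comp hx).div_const (incBeta 1 m (1 / 2))).const_mul
      (1 / 2 : ℝ)

end AverageOverNakagami

theorem lemma2_avg_Q_nakagami (m γbar α : ℝ) (hm : 0 < m) (hγ : 0 < γbar) (hα : 0 < α) :
    ∫ γ in Set.Ioi (0:ℝ), gaussQ (Real.sqrt (2 * α * γ)) * nakagamiPdf m γbar γ =
      (1 / 2) * regIncBeta (m / (m + α * γbar)) m (1 / 2) :=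
  eqOn_Ioi_of_hasDerivAt_of_tendsto_atTop
    (fun _ ha => hasDerivAt_integral_gaussQ_sqrt_mul_nakagamiPdf hm hγ ha)
    (fun _ ha => hasDerivAt_half_regIncBeta hm hγ ha)
    (tendsto_integral_gaussQ_sqrt_mul_atTop (integrableOn_nakagamiPdf hm hγ))
    (tendsto_half_regIncBeta_atTop hm hγ) hα
end

section
/- (Euler integral for the Appell F₁ function.) Let a > 0, α > 0, β > 0, and let ρ, λ be real, with u, v real numbers such that ua < 1 and va < 1. Then ∫₀^a x^{α-1}(a-x)^{β-1}(1-ux)^{-ρ}(1-vx)^{-λ} dx = a^{α+β-1} B(α,β) F₁(α, ρ, λ; α+β; ua, va), where F₁ is the Appell hypergeometric function of the first kind defined by its double power series F₁(α,ρ,λ;γ;x,y) = Σ_{j,k≥0} (α)_{j+k}(ρ)_j(λ)_k x^j y^k / ((γ)_{j+k} j! k!) for |x|,|y| < 1 (extended by the integral when the series does not converge). -/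
open MeasureTheory Real Set

noncomputable def poch (a : ℝ) (n : ℕ) : ℝ := ∏ i ∈ Finset.range n, (a + i)

/-- Appell hypergeometric function of the first kind, defined by its double power series. -/
noncomputable def appellF1 (α ρ lam γ x y : ℝ) : ℝ :=
  ∑' p : ℕ × ℕ,
    poch α (p.1 + p.2) * poch ρ p.1 * poch lam p.2 * x ^ p.1 * y ^ p.2 /
      (poch γ (p.1 + p.2) * (Nat.factorial p.1) * (Nat.factorial p.2))

/-! For `0 < x ≤ 1` the factors `(1 - u x)^(-ρ)` and `(1 - v x)^(-λ)` are binomial series in `u x`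
and `v x`, and their product is an absolutely convergent double series
`∑ c_{j,k} x^(j+k)` with `∑ |c_{j,k}| < ∞` independently of `x`. Against the integrable Beta kernel
`x^(α-1) (1-x)^(β-1)` this justifies integrating term by term, and the monomial `x^n` contributes
`B(α + n, β) = B(α, β) (α)_n / (α + β)_n`, by `B(a, b) = Γ(a) Γ(b) / Γ(a + b)` and
`Γ(a + n) = Γ(a) (a)_n`. -/

lemma poch_succ (a : ℝ) (n : ℕ) : poch a (n + 1) = poch a n * (a + n) :=
  Finset.prod_range_succ _ _

lemma poch_eq_ascPochhammer_eval (a : ℝ) (n : ℕ) : poch a n = (ascPochhammer ℝ n).eval a := by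
  induction n with
  | zero => simp [poch]
  | succ n ih => rw [poch_succ, ascPochhammer_succ_eval, ih]

lemma Ring.choose_add_sub_one_eq_poch_div (a : ℝ) (n : ℕ) :
    Ring.choose (a + n - 1) n = poch a n / n.factorial := by
  rw [Ring.choose_eq_smul, Polynomial.descPochhammer_smeval_eq_ascPochhammer,
    Polynomial.ascPochhammer_smeval_eq_eval, poch_eq_ascPochhammer_eval, smul_eq_mul,
    inv_mul_eq_div]
  ring_nf

lemma Real.mem_eball_zero_one_iff {t : ℝ} : t ∈ Metric.eball (0 : ℝ) 1 ↔ |t| < 1 := by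
  rw [Metric.mem_eball, edist_zero_right, Real.enorm_eq_ofReal_abs, ENNReal.ofReal_lt_one]

lemma hasFPowerSeriesOnBall_one_sub_rpow_neg (c : ℝ) :
    HasFPowerSeriesOnBall (fun t ↦ (1 - t) ^ (-c))
      (.ofScalars ℝ fun n ↦ poch c n / n.factorial) 0 1 := by
  have h := Real.one_div_one_sub_rpow_hasFPowerSeriesOnBall_zero c
  simp only [Ring.choose_add_sub_one_eq_poch_div] at h
  refine h.congr fun t ht ↦ ?_
  have : 0 ≤ 1 - t := by linarith [(abs_lt.mp (Real.mem_eball_zero_one_iff.mp ht)).2]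
  simp only [one_div, rpow_neg this]

lemma hasSum_poch_div_factorial_mul_pow (c : ℝ) {t : ℝ} (ht : |t| < 1) :
    HasSum (fun n ↦ poch c n / n.factorial * t ^ n) ((1 - t) ^ (-c)) := by
  have := (hasFPowerSeriesOnBall_one_sub_rpow_neg c).hasSum (Real.mem_eball_zero_one_iff.mpr ht)
  simpa [FormalMultilinearSeries.ofScalars_apply_eq, mul_comm] using this

lemma summable_norm_poch_div_factorial_mul_pow (c : ℝ) {t : ℝ} (ht : |t| < 1) :
    Summable fun n ↦ ‖poch c n / n.factorial * t ^ n‖ := by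
  have hf := hasFPowerSeriesOnBall_one_sub_rpow_neg c
  have := FormalMultilinearSeries.summable_norm_apply _
    (Metric.eball_subset_eball hf.r_le (Real.mem_eball_zero_one_iff.mpr ht))
  simpa [FormalMultilinearSeries.ofScalars_apply_eq, mul_comm] using this

lemma hasSum_poch_mul_poch_pow (ρ lam : ℝ) {s t : ℝ} (hs : |s| < 1) (ht : |t| < 1) :
    HasSum (fun p : ℕ × ℕ ↦
        poch ρ p.1 / p.1.factorial * s ^ p.1 * (poch lam p.2 / p.2.factorial * t ^ p.2))
      ((1 - s) ^ (-ρ) * (1 - t) ^ (-lam)) := by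
  have hρ := hasSum_poch_div_factorial_mul_pow ρ hs
  have hlam := hasSum_poch_div_factorial_mul_pow lam ht
  have hprod := summable_mul_of_summable_norm (summable_norm_poch_div_factorial_mul_pow ρ hs)
    (summable_norm_poch_div_factorial_mul_pow lam ht)
  exact hρ.mul hlam hprod

lemma poch_pos {a : ℝ} (ha : 0 < a) (n : ℕ) : 0 < poch a n :=
  Finset.prod_pos fun i _ ↦ by positivity

lemma Real.Gamma_add_nat_eq_mul_poch {a : ℝ} (ha : 0 < a) (n : ℕ) :
    Gamma (a + n) = Gamma a * poch a n := by
  induction n with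
  | zero => simp [poch]
  | succ n ih =>
    rw [Nat.cast_succ, ← add_assoc, Gamma_add_one (by positivity), ih, poch_succ]
    ring

lemma ofReal_beta_kernel (a b : ℝ) {x : ℝ} (hx : x ∈ Icc (0 : ℝ) 1) :
    ((x ^ (a - 1) * (1 - x) ^ (b - 1) : ℝ) : ℂ) =
      (x : ℂ) ^ ((a : ℂ) - 1) * (1 - (x : ℂ)) ^ ((b : ℂ) - 1) := by
  rw [Complex.ofReal_mul, Complex.ofReal_cpow hx.1, Complex.ofReal_cpow (by linarith [hx.2])]
  push_cast
  rfl

lemma integrableOn_beta_kernel {a b : ℝ} (ha : 0 < a) (hb : 0 < b) :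
    IntegrableOn (fun x : ℝ ↦ x ^ (a - 1) * (1 - x) ^ (b - 1)) (Ioc 0 1) := by
  refine IntegrableOn.congr_fun
    (Complex.betaIntegral_convergent (u := a) (v := b) (by simpa) (by simpa)).1.re
    (fun x hx ↦ ?_) measurableSet_Ioc
  simp only [← ofReal_beta_kernel a b (Ioc_subset_Icc_self hx), RCLike.re_to_complex,
    Complex.ofReal_re]

lemma incBeta_one_eq_Gamma {a b : ℝ} (ha : 0 < a) (hb : 0 < b) :
    incBeta 1 a b = Gamma a * Gamma b / Gamma (a + b) := by
  have hB : (incBeta 1 a b : ℂ) = Complex.betaIntegral a b := by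
    rw [incBeta, ← intervalIntegral.integral_ofReal, Complex.betaIntegral]
    refine intervalIntegral.integral_congr fun x hx ↦ ofReal_beta_kernel a b ?_
    rwa [uIcc_of_le zero_le_one] at hx
  have h := Complex.Gamma_mul_Gamma_eq_betaIntegral (s := a) (t := b) (by simpa) (by simpa)
  rw [← hB, ← Complex.ofReal_add, Complex.Gamma_ofReal, Complex.Gamma_ofReal,
    Complex.Gamma_ofReal] at h
  rw [eq_div_iff (Gamma_pos_of_pos (by linarith)).ne', mul_comm]
  exact_mod_cast h.symm

lemma incBeta_one_add_nat {a b : ℝ} (ha : 0 < a) (hb : 0 < b) (n : ℕ) :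
    incBeta 1 (a + n) b = incBeta 1 a b * (poch a n / poch (a + b) n) := by
  have hab : 0 < a + b := by linarith
  rw [incBeta_one_eq_Gamma (by positivity) hb, incBeta_one_eq_Gamma ha hb, add_right_comm,
    Gamma_add_nat_eq_mul_poch ha, Gamma_add_nat_eq_mul_poch hab]
  have := (Gamma_pos_of_pos hab).ne'
  have := (poch_pos hab n).ne'
  field_simp

lemma setIntegral_beta_kernel_mul_pow (a b : ℝ) (n : ℕ) :
    ∫ x in Ioc (0 : ℝ) 1, x ^ (a - 1) * (1 - x) ^ (b - 1) * x ^ n = incBeta 1 (a + n) b := by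
  rw [incBeta, intervalIntegral.integral_of_le zero_le_one]
  refine setIntegral_congr_fun measurableSet_Ioc fun x hx ↦ ?_
  rw [mul_right_comm, ← rpow_natCast, ← rpow_add hx.1, sub_add_eq_add_sub]

lemma integral_tsum_mul_mul_pow {ι : Type*} [Countable ι] {w : ℝ → ℝ}
    (hw : IntegrableOn w (Ioc 0 1)) {c : ι → ℝ} (hc : Summable fun i ↦ ‖c i‖) (n : ι → ℕ) :
    ∫ x in Ioc (0 : ℝ) 1, ∑' i, c i * (w x * x ^ n i) =
      ∑' i, c i * ∫ x in Ioc (0 : ℝ) 1, w x * x ^ n i := by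
  have hpow : ∀ k : ℕ, ∀ x ∈ Ioc (0 : ℝ) 1, ‖x ^ k‖ ≤ 1 := fun k x hx ↦ by
    rw [norm_pow, Real.norm_of_nonneg hx.1.le]
    exact pow_le_one₀ hx.1.le hx.2
  have hint : ∀ k : ℕ, IntegrableOn (fun x ↦ w x * x ^ k) (Ioc 0 1) := fun k ↦
    hw.mul_bdd (continuous_pow k).aestronglyMeasurable
      (ae_restrict_of_forall_mem measurableSet_Ioc (hpow k))
  have hnorm : ∀ k : ℕ, ∫ x in Ioc (0 : ℝ) 1, ‖w x * x ^ k‖ ≤ ∫ x in Ioc (0 : ℝ) 1, ‖w x‖ :=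
    fun k ↦ setIntegral_mono_on (hint k).norm hw.norm measurableSet_Ioc fun x hx ↦ by
      rw [norm_mul]
      exact mul_le_of_le_one_right (norm_nonneg _) (hpow k x hx)
  simp_rw [← integral_const_mul]
  refine (integral_tsum_of_summable_integral_norm (fun i ↦ (hint (n i)).const_mul (c i)) ?_).symm
  refine .of_nonneg_of_le (fun i ↦ integral_nonneg fun x ↦ norm_nonneg _) (fun i ↦ ?_)
    (hc.mul_right (∫ x in Ioc (0 : ℝ) 1, ‖w x‖))
  simp_rw [norm_mul (c i), integral_const_mul]
  exact mul_le_mul_of_nonneg_left (by simpa only [norm_mul] using hnorm (n i)) (norm_nonneg _)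

theorem euler_integral_appellF1 (α β ρ lam u v : ℝ)
    (hα : 0 < α) (hβ : 0 < β) (hu : |u| < 1) (hv : |v| < 1) :
    ∫ x in (0:ℝ)..1, x ^ (α - 1) * (1 - x) ^ (β - 1) *
        (1 - u * x) ^ (-ρ) * (1 - v * x) ^ (-lam) =
      incBeta 1 α β * appellF1 α ρ lam (α + β) u v := by
  set c : ℕ × ℕ → ℝ := fun p ↦
    poch ρ p.1 / p.1.factorial * u ^ p.1 * (poch lam p.2 / p.2.factorial * v ^ p.2)
  have hc : Summable fun p ↦ ‖c p‖ := by
    have hρ := summable_norm_poch_div_factorial_mul_pow ρ hu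
    have hlam := summable_norm_poch_div_factorial_mul_pow lam hv
    exact (hρ.mul_norm hlam :)
  have hexpand : ∀ x ∈ Ioc (0 : ℝ) 1,
      x ^ (α - 1) * (1 - x) ^ (β - 1) * (1 - u * x) ^ (-ρ) * (1 - v * x) ^ (-lam) =
        ∑' p, c p * (x ^ (α - 1) * (1 - x) ^ (β - 1) * x ^ (p.1 + p.2)) := fun x hx ↦ by
    have hx1 : |x| ≤ 1 := abs_le.mpr ⟨by linarith [hx.1], hx.2⟩
    have hsum := hasSum_poch_mul_poch_pow ρ lam
      (by rw [abs_mul]; exact mul_lt_one_of_nonneg_of_lt_one_left (abs_nonneg u) hu hx1)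
      (by rw [abs_mul]; exact mul_lt_one_of_nonneg_of_lt_one_left (abs_nonneg v) hv hx1)
    rw [mul_assoc _ ((1 - u * x) ^ (-ρ)), ← hsum.tsum_eq, ← tsum_mul_left]
    exact tsum_congr fun p ↦ by simp only [c]; ring
  rw [intervalIntegral.integral_of_le zero_le_one, setIntegral_congr_fun measurableSet_Ioc hexpand,
    integral_tsum_mul_mul_pow (integrableOn_beta_kernel hα hβ) hc, appellF1, ← tsum_mul_left]
  refine tsum_congr fun p ↦ ?_
  rw [setIntegral_beta_kernel_mul_pow, incBeta_one_add_nat hα hβ]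
  have := (poch_pos (add_pos hα hβ) (p.1 + p.2)).ne'
  simp only [c]
  field_simp
end

section
/- As γ̄ → ∞, the Lemma 2 average error probability decays polynomially with diversity order m: (1/2) I_{m/(m+αγ̄)}(m, 1/2) ~ (1/(2m B(m,1/2))) · (m/(αγ̄))^m, i.e., the ratio of the two sides tends to 1. -/
/-! For `t ∈ [0, x]` the factor `(1 - t) ^ (b - 1)` of the integrand of `B_x(a, b)` lies between `1`
and `(1 - x) ^ (b - 1)` when `b ≤ 1`, so `a B_x(a, b) / x ^ a` is squeezed between `1` and
`(1 - x) ^ (b - 1)` and tends to `1` as `x → 0⁺`. With `x = m / (m + α γ̄)` one has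
`m / (α γ̄) = x / (1 - x)`, so the ratio in the theorem is `m B_x(m, 1/2) / x ^ m · (1 - x) ^ m`. -/

open MeasureTheory Real Set Filter

open Topology

lemma continuousOn_one_sub_rpow (q : ℝ) {c : ℝ} (hc : c < 1) :
    ContinuousOn (fun t : ℝ => (1 - t) ^ q) (uIcc 0 c) := by
  refine ContinuousOn.rpow_const (by fun_prop) fun t ht => Or.inl ?_
  have : t < 1 := ht.2.trans_lt (max_lt one_pos hc)
  linarith

lemma intervalIntegrable_rpow_mul_one_sub_rpow {p : ℝ} (q : ℝ) {c : ℝ} (hp : -1 < p) (hc : c < 1) :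
    IntervalIntegrable (fun t : ℝ => t ^ p * (1 - t) ^ q) volume 0 c :=
  (intervalIntegral.intervalIntegrable_rpow' hp).mul_continuousOn (continuousOn_one_sub_rpow q hc)

lemma intervalIntegrable_rpow_mul_one_sub_rpow_zero_one {p q : ℝ} (hp : -1 < p) (hq : -1 < q) :
    IntervalIntegrable (fun t : ℝ => t ^ p * (1 - t) ^ q) volume 0 1 := by
  refine (intervalIntegrable_rpow_mul_one_sub_rpow q hp (by norm_num : (1 / 2 : ℝ) < 1)).trans ?_
  -- the integrand on `[1/2, 1]` is the reflection `t ↦ 1 - t` of the one with `p` and `q` swapped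
  have h :=
    (intervalIntegrable_rpow_mul_one_sub_rpow p hq (by norm_num : (1 / 2 : ℝ) < 1)).comp_sub_left 1
  norm_num at h
  simpa only [mul_comm] using h.symm

lemma incBeta_one_pos {a b : ℝ} (ha : 0 < a) (hb : 0 < b) : 0 < incBeta 1 a b := by
  refine intervalIntegral.intervalIntegral_pos_of_pos_on
    (intervalIntegrable_rpow_mul_one_sub_rpow_zero_one (by linarith) (by linarith))
    (fun t ht => ?_) one_pos
  have : 0 < 1 - t := by linarith [ht.2]
  have : 0 < t := ht.1
  positivity

lemma integral_rpow_sub_one {a : ℝ} (ha : 0 < a) (x : ℝ) :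
    ∫ t in (0 : ℝ)..x, t ^ (a - 1) = x ^ a / a := by
  rw [integral_rpow (Or.inl (by linarith)), sub_add_cancel, zero_rpow ha.ne', sub_zero]

section incBetaBounds

variable {x a b : ℝ} (hx0 : 0 ≤ x) (hx1 : x < 1) (ha : 0 < a) (hb : b ≤ 1)
include hx0 hx1 ha hb

lemma rpow_div_le_incBeta : x ^ a / a ≤ incBeta x a b := by
  rw [← integral_rpow_sub_one ha, incBeta]
  refine intervalIntegral.integral_mono_on hx0
    (intervalIntegral.intervalIntegrable_rpow' (by linarith))
    (intervalIntegrable_rpow_mul_one_sub_rpow _ (by linarith) hx1) fun t ht => ?_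
  have h1t : 0 < 1 - t := by linarith [ht.2]
  exact le_mul_of_one_le_right (rpow_nonneg ht.1 _)
    (one_le_rpow_of_pos_of_le_one_of_nonpos h1t (by linarith [ht.1]) (by linarith))

lemma incBeta_le_rpow_div_mul : incBeta x a b ≤ x ^ a / a * (1 - x) ^ (b - 1) := by
  rw [← integral_rpow_sub_one ha, ← intervalIntegral.integral_mul_const, incBeta]
  refine intervalIntegral.integral_mono_on hx0
    (intervalIntegrable_rpow_mul_one_sub_rpow _ (by linarith) hx1)
    ((intervalIntegral.intervalIntegrable_rpow' (by linarith)).mul_const _) fun t ht => ?_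
  exact mul_le_mul_of_nonneg_left
    (rpow_le_rpow_of_nonpos (by linarith) (by linarith [ht.2]) (by linarith)) (rpow_nonneg ht.1 _)

end incBetaBounds

lemma tendsto_mul_incBeta_div_rpow {a b : ℝ} (ha : 0 < a) (hb : b ≤ 1) :
    Tendsto (fun x => a * incBeta x a b / x ^ a) (𝓝[>] 0) (𝓝 1) := by
  have hupper : Tendsto (fun x : ℝ => (1 - x) ^ (b - 1)) (𝓝[>] 0) (𝓝 1) := by
    have h : Tendsto (fun x : ℝ => (1 - x) ^ (b - 1)) (𝓝 0) (𝓝 ((1 - 0) ^ (b - 1))) :=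
      (continuous_const.sub continuous_id).continuousAt.rpow_const (Or.inl (by norm_num))
    simpa using h.mono_left nhdsWithin_le_nhds
  have hunit : ∀ᶠ x in 𝓝[>] (0 : ℝ), x ∈ Ioo 0 1 := Ioo_mem_nhdsGT one_pos
  refine tendsto_of_tendsto_of_tendsto_of_le_of_le' tendsto_const_nhds hupper ?_ ?_
  · filter_upwards [hunit] with x ⟨hx0, hx1⟩
    rw [le_div_iff₀ (rpow_pos_of_pos hx0 a), one_mul, ← div_le_iff₀' ha]
    exact rpow_div_le_incBeta hx0.le hx1 ha hb
  · filter_upwards [hunit] with x ⟨hx0, hx1⟩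
    rw [div_le_iff₀ (rpow_pos_of_pos hx0 a), ← le_div_iff₀' ha, mul_div_assoc, mul_comm]
    exact incBeta_le_rpow_div_mul hx0.le hx1 ha hb

lemma tendsto_div_add_mul_atTop_nhdsGT_zero {m α : ℝ} (hm : 0 < m) (hα : 0 < α) :
    Tendsto (fun γ => m / (m + α * γ)) atTop (𝓝[>] 0) := by
  have hden : Tendsto (fun γ => m + α * γ) atTop atTop :=
    tendsto_atTop_add_const_left _ m (tendsto_id.const_mul_atTop hα)
  exact tendsto_nhdsWithin_iff.2 ⟨tendsto_const_nhds.div_atTop hden,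
    (hden.eventually_gt_atTop 0).mono fun γ hγ => div_pos hm hγ⟩

lemma regIncBeta_div_rpow_eq {x a b : ℝ} (hx0 : 0 < x) (hx1 : x < 1) (hB : incBeta 1 a b ≠ 0) :
    1 / 2 * regIncBeta x a b / (1 / (2 * a * incBeta 1 a b) * (x / (1 - x)) ^ a) =
      a * incBeta x a b / x ^ a * (1 - x) ^ a := by
  have h1x : 0 < 1 - x := by linarith
  rw [div_rpow hx0.le h1x.le, regIncBeta]
  have := (rpow_pos_of_pos hx0 a).ne'
  have := (rpow_pos_of_pos h1x a).ne'
  field_simp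

theorem aber_asymptotic_diversity_order (m α : ℝ) (hm : 0 < m) (hα : 0 < α) :
    Filter.Tendsto
      (fun γbar : ℝ =>
        ((1 / 2) * regIncBeta (m / (m + α * γbar)) m (1 / 2)) /
          ((1 / (2 * m * incBeta 1 m (1 / 2))) * (m / (α * γbar)) ^ m))
      Filter.atTop (nhds 1) := by
  have hx := tendsto_div_add_mul_atTop_nhdsGT_zero hm hα
  have hlim : Tendsto (fun γ => m * incBeta (m / (m + α * γ)) m (1 / 2) / (m / (m + α * γ)) ^ m *
      (1 - m / (m + α * γ)) ^ m) atTop (𝓝 (1 * (1 - 0) ^ m)) :=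
    ((tendsto_mul_incBeta_div_rpow hm (by norm_num)).comp hx).mul
      (((tendsto_nhdsWithin_iff.1 hx).1.const_sub 1).rpow_const (Or.inl (by norm_num)))
  rw [sub_zero, one_rpow, mul_one] at hlim
  refine hlim.congr' ?_
  filter_upwards [eventually_gt_atTop 0] with γ hγ
  have hαγ : 0 < α * γ := mul_pos hα hγ
  have hden : 0 < m + α * γ := by positivity
  have hratio : m / (α * γ) = m / (m + α * γ) / (1 - m / (m + α * γ)) := by
    field_simp; ring
  rw [hratio, regIncBeta_div_rpow_eq (div_pos hm hden)
    ((div_lt_one hden).2 (lt_add_of_pos_right m hαγ))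
    (incBeta_one_pos hm one_half_pos).ne']
end
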